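/- (Positive bias of the CR estimator in a homogeneous market.) Let λ > 0 and 0 < φ < φ̃. Write ψ = φ·F(φ) and ψ̃ = φ̃·F(φ̃), so ψ̃ > ψ. For a ∈ (0,1), define the limiting CR estimator value E_CR(a) = λ·(ψ̃ − ψ)·F(λ·(a·ψ̃ + (1−a)·ψ)) and GTE = λ·(ψ̃·F(λψ̃) − ψ·F(λψ)). Then E_CR(a) > GTE for all a ∈ (0,1). -/

import Mathlib

noncomputable def F : ℝ → ℝ := fun x => if x = 0 then 1 else (1 - Real.exp (-x)) / x

/-!
Write `h x = exp (-x)`, a strictly convex function, so that `x * F x = h 0 - h x` and `F x` is minus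
the slope of the secant of `h` over `[0, x]`. With `u = λψ < t < v = λψ̃`, the ground truth is
`v F v - u F u = h u - h v`, and monotonicity of secant slopes of `h` gives
`h u - h v ≤ (v - u) F v < (v - u) F t`, the CR estimator.
-/

open Real Set

lemma strictConvexOn_exp_neg : StrictConvexOn ℝ univ fun x : ℝ => exp (-x) := by
  refine ⟨convex_univ, fun x _ y _ hxy a b ha hb hab => ?_⟩
  have h := strictConvexOn_exp.2 (mem_univ (-x)) (mem_univ (-y)) (neg_injective.ne hxy) ha hb hab
  simp only [smul_eq_mul] at h ⊢
  convert h using 2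
  ring

lemma mul_F (x : ℝ) : x * F x = 1 - exp (-x) := by
  by_cases hx : x = 0
  · simp [hx]
  · simp [F, hx, mul_div_cancel₀ _ hx]

lemma strictMono_mul_F : StrictMono fun x => x * F x := by
  intro x y hxy
  simp only [mul_F, sub_lt_sub_iff_left, exp_lt_exp, neg_lt_neg_iff, hxy]

lemma F_eq_neg_secant_exp_neg {x : ℝ} (hx : x ≠ 0) :
    F x = -((exp (-x) - exp (-0)) / (x - 0)) := by
  simp [F, hx, ← neg_div]

lemma F_strictAntiOn : StrictAntiOn F (Ioi 0) := by
  intro x (hx : 0 < x) y (hy : 0 < y) hxy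
  rw [F_eq_neg_secant_exp_neg hx.ne', F_eq_neg_secant_exp_neg hy.ne', neg_lt_neg_iff]
  exact strictConvexOn_exp_neg.secant_strict_mono (mem_univ 0) (mem_univ x) (mem_univ y)
    hx.ne' hy.ne' hxy

lemma exp_neg_sub_exp_neg_le {u v : ℝ} (hu : 0 ≤ u) (huv : u < v) :
    exp (-u) - exp (-v) ≤ (v - u) * F v := by
  have hv : 0 < v := hu.trans_lt huv
  have h := strictConvexOn_exp_neg.convexOn.secant_mono (mem_univ v) (mem_univ 0) (mem_univ u)
    hv.ne huv.ne hu
  rw [← neg_div_neg_eq, ← neg_div_neg_eq (exp (-u) - _), div_le_div_iff₀ (by linarith)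
    (by linarith), neg_zero, exp_zero] at h
  refine le_of_mul_le_mul_left ?_ hv
  linear_combination h - (v - u) * mul_F v

lemma mul_F_sub_mul_F_lt {u t v : ℝ} (hu : 0 ≤ u) (hut : u < t) (htv : t < v) :
    v * F v - u * F u < (v - u) * F t :=
  calc v * F v - u * F u = exp (-u) - exp (-v) := by rw [mul_F, mul_F]; ring
    _ ≤ (v - u) * F v := exp_neg_sub_exp_neg_le hu (hut.trans htv)
    _ < (v - u) * F t :=
      mul_lt_mul_of_pos_left (F_strictAntiOn (hu.trans_lt hut) (hu.trans_lt (hut.trans htv)) htv)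
        (by linarith)

theorem stmt_6 (lam φ φt : ℝ) (hlam : 0 < lam) (hφ : 0 < φ) (hlt : φ < φt)
    (a : ℝ) (ha : a ∈ Set.Ioo (0:ℝ) 1) :
    lam * (φt * F φt * F (lam * φt * F φt) - φ * F φ * F (lam * φ * F φ))
      < lam * (φt * F φt - φ * F φ)
          * F (lam * (a * (φt * F φt) + (1 - a) * (φ * F φ))) := by
  obtain ⟨ha0, ha1⟩ := ha
  set ψ := φ * F φ
  set ψt := φt * F φt
  have hψ : 0 < ψ := by simpa using strictMono_mul_F hφ
  have hψψt : ψ < ψt := strictMono_mul_F hlt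
  have key := mul_F_sub_mul_F_lt (u := lam * ψ) (t := lam * (a * ψt + (1 - a) * ψ))
    (v := lam * ψt) (by positivity)
    (by nlinarith [mul_pos (mul_pos hlam ha0) (sub_pos.2 hψψt)])
    (by nlinarith [mul_pos (mul_pos hlam (sub_pos.2 ha1)) (sub_pos.2 hψψt)])
  simp only [mul_assoc] at key ⊢
  linarith
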